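/- Let a, b, c, d be integers with a² + b² + c² = 3d², d odd and gcd(a,b,c) = 1. Then (ac)² + 3(bd)² = (a² + b²)(b² + c²), and 2(a² + b²) divides (ac)² + 3(bd)². -/

import Mathlib

/-!
Substituting `3d² = a² + b² + c²` turns `(ac)² + 3(bd)²` into `(a² + b²)(b² + c²)`.
Since `d` is odd, `a² + b² + c² ≡ 3 (mod 4)`; squares are `0` or `1` mod `4`, so `a`, `b`, `c`
are all odd, whence `b² + c²` is even.
-/

theorem Int.sq_emod_four_eq_zero_of_even {x : ℤ} (hx : Even x) : x ^ 2 % 4 = 0 := by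
  obtain ⟨k, rfl⟩ := hx
  rw [show (k + k) ^ 2 = 4 * k ^ 2 by ring, Int.mul_emod_right]

theorem Int.sq_emod_four_le_one (x : ℤ) : x ^ 2 % 4 ≤ 1 := by
  rcases Int.even_or_odd x with hx | hx
  · rw [Int.sq_emod_four_eq_zero_of_even hx]; norm_num
  · rw [Int.sq_mod_four_eq_one_of_odd hx]

theorem Int.odd_of_sq_add_sq_add_sq_eq_three_mul_sq {a b c d : ℤ}
    (h : a ^ 2 + b ^ 2 + c ^ 2 = 3 * d ^ 2) (hd : Odd d) : Odd a := by
  by_contra ha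
  have ha4 := Int.sq_emod_four_eq_zero_of_even (Int.not_odd_iff_even.mp ha)
  have hd4 := Int.sq_mod_four_eq_one_of_odd hd
  have hb4 := Int.sq_emod_four_le_one b
  have hc4 := Int.sq_emod_four_le_one c
  omega

theorem mul_sq_add_three_mul_sq_eq_of_sq_add_sq_add_sq_eq_three_mul_sq {R : Type*} [CommRing R]
    {a b c d : R} (h : a ^ 2 + b ^ 2 + c ^ 2 = 3 * d ^ 2) :
    (a * c) ^ 2 + 3 * (b * d) ^ 2 = (a ^ 2 + b ^ 2) * (b ^ 2 + c ^ 2) := by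
  linear_combination (-b ^ 2) * h

theorem identity_and_divisibility_general (a b c d : ℤ)
    (habc : a ^ 2 + b ^ 2 + c ^ 2 = 3 * d ^ 2) (hd : Odd d) :
    (a * c) ^ 2 + 3 * (b * d) ^ 2 = (a ^ 2 + b ^ 2) * (b ^ 2 + c ^ 2) ∧
    2 * (a ^ 2 + b ^ 2) ∣ (a * c) ^ 2 + 3 * (b * d) ^ 2 := by
  have key := mul_sq_add_three_mul_sq_eq_of_sq_add_sq_add_sq_eq_three_mul_sq habc
  have hb : Odd b :=
    Int.odd_of_sq_add_sq_add_sq_eq_three_mul_sq (b := a) (c := c) (by linear_combination habc) hd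
  have hc : Odd c :=
    Int.odd_of_sq_add_sq_add_sq_eq_three_mul_sq (b := a) (c := b) (by linear_combination habc) hd
  have heven : 2 ∣ b ^ 2 + c ^ 2 := (hb.pow.add_odd hc.pow).two_dvd
  refine ⟨key, key ▸ ?_⟩
  rw [mul_comm 2]
  exact mul_dvd_mul_left _ heven

/-- `(ac)² + 3(bd)² = (a² + b²)(b² + c²)` and `2(a² + b²)` divides `(ac)² + 3(bd)²`,
for integers with `a² + b² + c² = 3d²`, `d` odd and `gcd(a,b,c) = 1`. -/
theorem identity_and_divisibility (a b c d : ℤ)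
    (habc : a ^ 2 + b ^ 2 + c ^ 2 = 3 * d ^ 2) (hd : Odd d)
    (hgcd : Int.gcd (Int.gcd a b) c = 1) :
    (a * c) ^ 2 + 3 * (b * d) ^ 2 = (a ^ 2 + b ^ 2) * (b ^ 2 + c ^ 2) ∧
    2 * (a ^ 2 + b ^ 2) ∣ (a * c) ^ 2 + 3 * (b * d) ^ 2 :=
  identity_and_divisibility_general a b c d habc hd
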